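/- arXiv:1806.07591 — 2 statements merged into one kernel-verified Lean document; each statement's English description precedes it below -/
import Mathlib

section
/- Let n ≥ 1 and let Y_n be a minimizer of the quantization energy among subsets of Q with n points. Then every generator y ∈ Y_n lies in the topological interior (in ℝ³) of its Voronoi cell V_y; in particular, y does not lie on the boundary of V_y. -/
open MeasureTheory

noncomputable section

/-- Euclidean 3-space. -/
abbrev E3 := EuclideanSpace ℝ (Fin 3)

/-- The closed unit cube Q = [0,1]³. -/
def Qcube : Set E3 := {x | ∀ i, x i ∈ Set.Icc (0 : ℝ) 1}

/-- The quantization energy E(Y) = ∫_Q dist(x,Y)² dx. -/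
def quantE (Y : Finset E3) : ℝ := ∫ x in Qcube, (Metric.infDist x (↑Y : Set E3)) ^ 2

/-- The Voronoi cell of a generator y ∈ Y, relative to Q. -/
def vorCell (Y : Finset E3) (y : E3) : Set E3 :=
  {x ∈ Qcube | ∀ z ∈ Y, dist x y ≤ dist x z}

/-- Y is a minimizer of the quantization energy among n-point subsets of Q. -/
def IsMinimizer (n : ℕ) (Y : Finset E3) : Prop :=
  (↑Y : Set E3) ⊆ Qcube ∧ Y.card = n ∧
    ∀ Z : Finset E3, (↑Z : Set E3) ⊆ Qcube → Z.card = n → quantE Y ≤ quantE Z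

/-- ω₃ = 4π/3, the volume of the unit ball in ℝ³. -/
def omega3 : ℝ := 4 * Real.pi / 3

/-- Γ₁ = (2/5)^{2/3} / 40. -/
def Gamma1 : ℝ := ((2 / 5 : ℝ) ^ ((2 : ℝ) / 3)) / 40

/-- Γ₃ = ω₃^{-1/5} Γ₁^{1/5}. -/
def Gamma3 : ℝ := omega3 ^ (-(1 : ℝ) / 5) * Gamma1 ^ ((1 : ℝ) / 5)

/-- Γ₅ = (1/4)(√(1 + 2⁴·3³/(5²·10³)) − 1) Γ₃. -/
def Gamma5 : ℝ :=
  (1 / 4) * (Real.sqrt (1 + (2 ^ 4 * 3 ^ 3 : ℝ) / (5 ^ 2 * 10 ^ 3)) - 1) * Gamma3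

/-- Γ₄, the diameter upper-bound constant. -/
def Gamma4 : ℝ :=
  (2 * (12 : ℝ) ^ ((1 : ℝ) / 4) * (16 : ℝ) ^ ((1 : ℝ) / 3) /
      (Real.pi ^ ((1 : ℝ) / 4) * omega3 ^ ((1 : ℝ) / 12))) *
    (Real.sqrt (1 + (2 ^ 4 * 3 ^ 3 : ℝ) / (5 ^ 2 * 10 ^ 3)) - 1) ^ (-(1 : ℝ) / 2) *
    ((5 ^ 2 * 10 ^ 3 : ℝ) / (2 ^ 2 * 3 ^ 3)) ^ ((1 : ℝ) / 4)


/-!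
A minimizer is centroidal: replacing a generator `y` by the centroid `b` of its cell lowers the
energy by at least `|V_y| · |y - b|²` (parallel axis theorem), so `y = b`. The cell has positive
volume, for otherwise `y` could be dropped at no cost and re-placed anywhere in `Q` off the other
generators, strictly lowering the energy. Since coordinate hyperplanes are null, the centroid of a
set of positive volume in `Q` has no coordinate equal to `0` or `1`, so `y` lies in the open cube;
being strictly closer to itself than to the other generators, it is then interior to its cell.
-/

open Metric Set

section ParallelAxis

variable {F : Type*} [NormedAddCommGroup F] [InnerProductSpace ℝ F] [CompleteSpace F]
  [MeasurableSpace F] {μ : Measure F} {A : Set F}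

theorem setIntegral_dist_sq_sub_dist_sq_setAverage (hA : μ A ≠ ⊤)
    (hid : IntegrableOn (fun x => x) A μ) (z : F) :
    ∫ x in A, (dist x z ^ 2 - dist x (⨍ x in A, x ∂μ) ^ 2) ∂μ =
      μ.real A * dist z (⨍ x in A, x ∂μ) ^ 2 := by
  set b := ⨍ x in A, x ∂μ
  have hb : ∫ x in A, x ∂μ = μ.real A • b := (measure_smul_setAverage _ hA).symm
  have hpointwise : ∀ x : F, dist x z ^ 2 - dist x b ^ 2 =
      2 * inner ℝ (b - z) x + (‖z‖ ^ 2 - ‖b‖ ^ 2) := by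
    intro x
    rw [dist_eq_norm, dist_eq_norm, norm_sub_sq_real, norm_sub_sq_real, inner_sub_left,
      real_inner_comm x z, real_inner_comm x b]
    ring
  have : IsFiniteMeasure (μ.restrict A) := isFiniteMeasure_restrict.2 hA
  simp_rw [hpointwise]
  rw [integral_add ((hid.integrable.const_inner (b - z)).const_mul 2) (integrable_const _),
    integral_const_mul, integral_inner hid.integrable, hb, setIntegral_const, smul_eq_mul,
    inner_smul_right, dist_eq_norm, norm_sub_sq_real, inner_sub_left,
    real_inner_self_eq_norm_sq]
  ring

end ParallelAxis

theorem setIntegral_pos_of_nonneg_of_measure_zeros {X : Type*} [MeasurableSpace X]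
    {μ : Measure X} {A : Set X} {f : X → ℝ} (hA : MeasurableSet A) (hμA : μ A ≠ 0)
    (hf : IntegrableOn f A μ) (hf_nonneg : ∀ x ∈ A, 0 ≤ f x)
    (hzeros : μ {x | f x = 0} = 0) :
    0 < ∫ x in A, f x ∂μ := by
  rw [setIntegral_pos_iff_support_of_nonneg_ae (ae_restrict_of_forall_mem hA hf_nonneg) hf]
  rw [← measure_sdiff_null hzeros] at hμA
  exact (pos_iff_ne_zero.2 hμA).trans_le (measure_mono fun x ⟨hxA, hx⟩ => ⟨hx, hxA⟩)

theorem infDist_erase_eq_of_dist_lt {X : Type*} [MetricSpace X] [DecidableEq X] {Y : Finset X}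
    {x y z : X} (hz : z ∈ Y) (hzy : dist x z < dist x y) :
    infDist x (Y.erase y : Set X) = infDist x Y := by
  obtain ⟨w, hwY, hw⟩ := Y.finite_toSet.isCompact.exists_infDist_eq_dist ⟨z, hz⟩ x
  have hwy : w ≠ y := by
    rintro rfl
    exact (infDist_le_dist_of_mem (Finset.mem_coe.2 hz)).not_gt (hw ▸ hzy)
  refine le_antisymm ?_ (infDist_le_infDist_of_subset (by simp) ⟨w, by simp [hwy, hwY]⟩)
  exact hw ▸ infDist_le_dist_of_mem (by simp [hwy, Finset.mem_coe.1 hwY])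

theorem EuclideanSpace.volume_setOf_apply_eq {ι : Type*} [Fintype ι] (i : ι) (c : ℝ) :
    volume {x : EuclideanSpace ℝ ι | x i = c} = 0 := by
  classical
  let π : EuclideanSpace ℝ ι →L[ℝ] ℝ := EuclideanSpace.proj i
  let H : AffineSubspace ℝ (EuclideanSpace ℝ ι) :=
    AffineSubspace.mk' (EuclideanSpace.single i c) (LinearMap.ker π.toLinearMap)
  have hH : {x : EuclideanSpace ℝ ι | x i = c} = H := by
    ext x
    simp [H, π, AffineSubspace.mem_mk', sub_eq_zero]
  have hH_ne_top : H ≠ ⊤ := by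
    intro h
    have : EuclideanSpace.single i (c + 1) ∈ H := h ▸ AffineSubspace.mem_top ℝ _ _
    rw [← SetLike.mem_coe, ← hH] at this
    simp at this
  rw [hH]
  exact Measure.addHaar_affineSubspace volume H hH_ne_top

theorem isCompact_Qcube : IsCompact Qcube := by
  have : Qcube = EuclideanSpace.equiv (Fin 3) ℝ ⁻¹' univ.pi fun _ => Icc 0 1 := by
    ext x
    simp only [Qcube, mem_preimage, mem_univ_pi]
    rfl
  rw [this]
  exact (EuclideanSpace.equiv (Fin 3) ℝ).toHomeomorph.isCompact_preimage.2
    (isCompact_univ_pi fun _ => isCompact_Icc)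

theorem measurableSet_Qcube : MeasurableSet Qcube := isCompact_Qcube.isClosed.measurableSet

theorem convex_Qcube : Convex ℝ Qcube := by
  intro x hx y hy a b ha hb hab i
  have hxi := hx i
  have hyi := hy i
  simp only [PiLp.add_apply, PiLp.smul_apply, smul_eq_mul, mem_Icc] at hxi hyi ⊢
  constructor <;> nlinarith

theorem mem_interior_Qcube_of_forall_mem_Ioo {x : E3} (hx : ∀ i, x i ∈ Ioo 0 1) :
    x ∈ interior Qcube := by
  have hopen : IsOpen {x : E3 | ∀ i, x i ∈ Ioo 0 1} := by
    simp only [ofPred_forall]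
    exact isOpen_iInter_of_finite fun i =>
      isOpen_Ioo.preimage (EuclideanSpace.proj i).continuous
  exact interior_maximal (t := {x : E3 | ∀ i, x i ∈ Ioo 0 1})
    (fun x hx i => Ioo_subset_Icc_self (hx i)) hopen hx

theorem interior_Qcube_nonempty : (interior Qcube).Nonempty :=
  ⟨WithLp.toLp 2 fun _ => 1 / 2, mem_interior_Qcube_of_forall_mem_Ioo fun _ => by norm_num⟩

theorem volume_Qcube_inter_ball_pos {p : E3} (hp : p ∈ Qcube) {r : ℝ} (hr : 0 < r) :
    0 < volume (Qcube ∩ ball p r) := by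
  have hp' : p ∈ closure (interior Qcube) := by
    rw [convex_Qcube.closure_interior_eq_closure_of_nonempty_interior interior_Qcube_nonempty]
    exact subset_closure hp
  obtain ⟨q, hq, hpq⟩ := Metric.mem_closure_iff.1 hp' r hr
  refine (isOpen_interior.inter isOpen_ball).measure_pos volume ⟨q, hq, ?_⟩
    |>.trans_le (measure_mono (inter_subset_inter_left _ interior_subset))
  rwa [mem_ball, dist_comm]

theorem Qcube_infinite : Qcube.Infinite := by
  intro hfin
  obtain ⟨p, hp⟩ := interior_Qcube_nonempty
  have := volume_Qcube_inter_ball_pos (interior_subset hp) one_pos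
  exact this.ne' (measure_mono_null inter_subset_left (hfin.measure_zero volume))

theorem setAverage_mem_interior_Qcube {A : Set E3} (hA : MeasurableSet A) (hAQ : A ⊆ Qcube)
    (hA0 : volume A ≠ 0) : ⨍ x in A, x ∈ interior Qcube := by
  refine mem_interior_Qcube_of_forall_mem_Ioo fun i => ?_
  have hcont {f : E3 → ℝ} (hf : Continuous f) : IntegrableOn f A :=
    (hf.continuousOn.integrableOn_compact isCompact_Qcube).mono_set hAQ
  have hcoord : Continuous fun x : E3 => x i := (EuclideanSpace.proj i).continuous
  have hm : 0 < volume.real A :=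
    ENNReal.toReal_pos hA0 (measure_mono hAQ |>.trans_lt isCompact_Qcube.measure_lt_top).ne
  have hlow : 0 < ∫ x in A, x i :=
    setIntegral_pos_of_nonneg_of_measure_zeros hA hA0 (hcont hcoord) (fun x hx => (hAQ hx i).1)
      (EuclideanSpace.volume_setOf_apply_eq i 0)
  have hhigh : 0 < ∫ x in A, (1 - x i) := by
    refine setIntegral_pos_of_nonneg_of_measure_zeros hA hA0 (hcont (by fun_prop))
      (fun x hx => sub_nonneg.2 (hAQ hx i).2) ?_
    simpa only [sub_eq_zero, eq_comm (a := (1 : ℝ))] using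
      EuclideanSpace.volume_setOf_apply_eq i 1
  rw [integral_sub (hcont continuous_const) (hcont hcoord), setIntegral_const, smul_eq_mul,
    mul_one, sub_pos] at hhigh
  rw [setAverage_eq, PiLp.smul_apply,
    eval_integral_piLp (fun j => hcont (EuclideanSpace.proj j).continuous), smul_eq_mul,
    ← div_eq_inv_mul]
  exact ⟨div_pos hlow hm, (div_lt_one hm).2 hhigh⟩

theorem exists_dist_lt_of_notMem_vorCell {Y : Finset E3} {y x : E3} (hxQ : x ∈ Qcube)
    (hx : x ∉ vorCell Y y) : ∃ z ∈ Y, dist x z < dist x y := by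
  simpa [vorCell, hxQ] using hx

theorem infDist_eq_dist_of_mem_vorCell {Y : Finset E3} {y x : E3} (hy : y ∈ Y)
    (hx : x ∈ vorCell Y y) : infDist x Y = dist x y := by
  refine le_antisymm (infDist_le_dist_of_mem hy) ?_
  have : Nonempty (Y : Set E3) := ⟨⟨y, hy⟩⟩
  exact (infDist_eq_iInf (x := x)).symm ▸ le_ciInf fun z => hx.2 z z.2

theorem isClosed_vorCell (Y : Finset E3) (y : E3) : IsClosed (vorCell Y y) := by
  have : vorCell Y y = Qcube ∩ ⋂ z ∈ Y, {x | dist x y ≤ dist x z} := by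
    ext x
    simp [vorCell]
  rw [this]
  exact isCompact_Qcube.isClosed.inter <| isClosed_biInter fun z _ =>
    isClosed_le (continuous_id.dist continuous_const) (continuous_id.dist continuous_const)

theorem integrableOn_Qcube_infDist_sq (S : Set E3) :
    IntegrableOn (fun x => infDist x S ^ 2) Qcube :=
  ((continuous_infDist_pt S).pow 2).continuousOn.integrableOn_compact isCompact_Qcube

theorem quantE_anti {W Z : Finset E3} (hWZ : W ⊆ Z) (hW : W.Nonempty) :
    quantE Z ≤ quantE W :=
  setIntegral_mono_on (integrableOn_Qcube_infDist_sq _) (integrableOn_Qcube_infDist_sq _)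
    measurableSet_Qcube fun _ _ => pow_le_pow_left₀ infDist_nonneg
      (infDist_le_infDist_of_subset (Finset.coe_subset.2 hWZ) (Finset.coe_nonempty.2 hW)) 2

theorem quantE_insert_lt {Z : Finset E3} (hZ : Z.Nonempty) {p : E3} (hpQ : p ∈ Qcube)
    (hpZ : p ∉ Z) : quantE (insert p Z) < quantE Z := by
  set δ := infDist p Z
  have hδ : 0 < δ :=
    (Z.finite_toSet.isClosed.notMem_iff_infDist_pos (Finset.coe_nonempty.2 hZ)).1 hpZ
  have hle (x : E3) : infDist x (insert p Z : Finset E3) ^ 2 ≤ infDist x Z ^ 2 :=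
    pow_le_pow_left₀ infDist_nonneg (infDist_le_infDist_of_subset
      (Finset.coe_subset.2 (Finset.subset_insert p Z)) (Finset.coe_nonempty.2 hZ)) 2
  have hlt {x : E3} (hx : dist p x < δ / 2) :
      infDist x (insert p Z : Finset E3) ^ 2 < infDist x Z ^ 2 := by
    have hnear : infDist x (insert p Z : Finset E3) < δ / 2 :=
      (infDist_le_dist_of_mem (by simp)).trans_lt (dist_comm x p ▸ hx)
    have hfar : δ / 2 < infDist x Z := by
      linarith [infDist_le_infDist_add_dist (s := (Z : Set E3)) (x := p) (y := x)]
    exact pow_lt_pow_left₀ (hnear.trans hfar) infDist_nonneg two_ne_zero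
  rw [← sub_pos, quantE, quantE,
    ← integral_sub (integrableOn_Qcube_infDist_sq _) (integrableOn_Qcube_infDist_sq _),
    setIntegral_pos_iff_support_of_nonneg_ae
      (ae_restrict_of_forall_mem measurableSet_Qcube fun x _ => sub_nonneg.2 (hle x))
      ((integrableOn_Qcube_infDist_sq _).sub (integrableOn_Qcube_infDist_sq _))]
  refine (volume_Qcube_inter_ball_pos hpQ (half_pos hδ)).trans_le (measure_mono ?_)
  rintro x ⟨hxQ, hx⟩
  exact ⟨(sub_pos.2 (hlt (mem_ball'.1 hx))).ne', hxQ⟩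

theorem quantE_eq_quantE_erase {Y : Finset E3} {y : E3} (hvol : volume (vorCell Y y) = 0) :
    quantE Y = quantE (Y.erase y) := by
  refine setIntegral_congr_ae measurableSet_Qcube ?_
  filter_upwards [measure_eq_zero_iff_ae_notMem.1 hvol] with x hx hxQ
  obtain ⟨z, hz, hzy⟩ := exists_dist_lt_of_notMem_vorCell hxQ hx
  rw [infDist_erase_eq_of_dist_lt hz hzy]

theorem setIntegral_vorCell_le_quantE_sub (Y : Finset E3) {y : E3} (hy : y ∈ Y) (b : E3) :
    ∫ x in vorCell Y y, (dist x y ^ 2 - dist x b ^ 2) ≤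
      quantE Y - quantE (insert b (Y.erase y)) := by
  have hA := (isClosed_vorCell Y y).measurableSet
  have hAQ : vorCell Y y ⊆ Qcube := fun x hx => hx.1
  rw [quantE, quantE,
    ← integral_sub (integrableOn_Qcube_infDist_sq _) (integrableOn_Qcube_infDist_sq _),
    ← inter_eq_right.2 hAQ, ← setIntegral_indicator hA]
  refine setIntegral_mono_on ?_ ?_ measurableSet_Qcube fun x hxQ => ?_
  · exact (ContinuousOn.integrableOn_compact isCompact_Qcube (by fun_prop)).indicator hA
  · exact (integrableOn_Qcube_infDist_sq _).sub (integrableOn_Qcube_infDist_sq _)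
  by_cases hxA : x ∈ vorCell Y y
  · rw [indicator_of_mem hxA, infDist_eq_dist_of_mem_vorCell hy hxA]
    have : infDist x (insert b (Y.erase y) : Finset E3) ≤ dist x b :=
      infDist_le_dist_of_mem (by simp)
    exact sub_le_sub_left (pow_le_pow_left₀ infDist_nonneg this 2) _
  · obtain ⟨z, hz, hzy⟩ := exists_dist_lt_of_notMem_vorCell hxQ hxA
    have hzy' : z ≠ y := by
      rintro rfl
      exact hzy.false
    rw [indicator_of_notMem hxA, sub_nonneg, ← infDist_erase_eq_of_dist_lt hz hzy]
    exact pow_le_pow_left₀ infDist_nonneg (infDist_le_infDist_of_subset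
      (Finset.coe_subset.2 (Finset.subset_insert _ _)) ⟨z, by simp [hz, hzy']⟩) 2

theorem mem_interior_vorCell {Y : Finset E3} {y : E3} (hy : y ∈ interior Qcube) :
    y ∈ interior (vorCell Y y) := by
  let U := interior Qcube ∩ ⋂ z ∈ Y.erase y, {x | dist x y < dist x z}
  have hU : IsOpen U := isOpen_interior.inter <|
    isOpen_biInter_finset fun z _ => isOpen_lt (by fun_prop) (by fun_prop)
  have hU_sub : U ⊆ vorCell Y y := by
    rintro x ⟨hxQ, hx⟩
    refine ⟨interior_subset hxQ, fun z hz => ?_⟩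
    rcases eq_or_ne z y with rfl | hzy
    · exact le_rfl
    · exact (mem_iInter₂.1 hx z (Finset.mem_erase.2 ⟨hzy, hz⟩)).le
  refine interior_maximal hU_sub hU ⟨hy, mem_iInter₂.2 fun z hz => ?_⟩
  simpa using dist_pos.2 (Finset.ne_of_mem_erase hz).symm

namespace IsMinimizer

variable {n : ℕ} {Y : Finset E3} {y : E3}

theorem quantE_le (hY : IsMinimizer n Y) {Z : Finset E3} (hZQ : (Z : Set E3) ⊆ Qcube)
    (hZ : Z.Nonempty) (hZn : Z.card ≤ n) : quantE Y ≤ quantE Z := by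
  obtain ⟨T, hTQ, hT⟩ :=
    (Qcube_infinite.sdiff Z.finite_toSet).exists_subset_card_eq (n - Z.card)
  have hdisj : Disjoint Z T := Finset.disjoint_left.2 fun x hxZ hxT => (hTQ hxT).2 hxZ
  calc quantE Y ≤ quantE (Z ∪ T) := hY.2.2 _
        (by simpa using union_subset hZQ fun x hx => (hTQ hx).1)
        (by rw [Finset.card_union_of_disjoint hdisj, hT]; omega)
    _ ≤ quantE Z := quantE_anti Finset.subset_union_left hZ

theorem quantE_le_insert_erase (hY : IsMinimizer n Y) (hy : y ∈ Y) {b : E3} (hb : b ∈ Qcube) :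
    quantE Y ≤ quantE (insert b (Y.erase y)) := by
  refine hY.quantE_le ?_ (Finset.insert_nonempty _ _) ?_
  · simpa using insert_subset hb (sdiff_subset.trans hY.1)
  · calc (insert b (Y.erase y)).card ≤ (Y.erase y).card + 1 := Finset.card_insert_le _ _
      _ = n := by rw [Finset.card_erase_add_one hy, hY.2.1]

theorem volume_vorCell_pos (hY : IsMinimizer n Y) (hy : y ∈ Y) : 0 < volume (vorCell Y y) := by
  rw [pos_iff_ne_zero]
  intro hvol
  rcases (Y.erase y).eq_empty_or_nonempty with hYy | hYy
  · have hY_eq : ∀ z ∈ Y, z = y := fun z hz => by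
      by_contra hzy
      simpa [hYy] using Finset.mem_erase.2 ⟨hzy, hz⟩
    have hQ : Qcube ⊆ vorCell Y y := fun x hx => ⟨hx, fun z hz => hY_eq z hz ▸ le_rfl⟩
    obtain ⟨p, hp⟩ := interior_Qcube_nonempty
    exact (volume_Qcube_inter_ball_pos (interior_subset hp) one_pos).ne'
      (measure_mono_null (inter_subset_left.trans hQ) hvol)
  · obtain ⟨p, hpQ, hpY⟩ := (Qcube_infinite.sdiff Y.finite_toSet).nonempty
    have hlt := quantE_insert_lt hYy hpQ fun h => hpY (Finset.mem_of_mem_erase h)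
    rw [← quantE_eq_quantE_erase hvol] at hlt
    exact (hY.quantE_le_insert_erase hy hpQ).not_gt hlt

theorem eq_setAverage_vorCell (hY : IsMinimizer n Y) (hy : y ∈ Y) :
    y = ⨍ x in vorCell Y y, x := by
  set A := vorCell Y y
  have hA := (isClosed_vorCell Y y).measurableSet
  have hAQ : A ⊆ Qcube := fun x hx => hx.1
  have hA0 := hY.volume_vorCell_pos hy
  have hAfin : volume A ≠ ⊤ := (measure_mono hAQ |>.trans_lt isCompact_Qcube.measure_lt_top).ne
  have hb := interior_subset (setAverage_mem_interior_Qcube hA hAQ hA0.ne')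
  have hparallel := setIntegral_dist_sq_sub_dist_sq_setAverage hAfin
    ((continuous_id.continuousOn.integrableOn_compact isCompact_Qcube).mono_set hAQ) y
  have hgain := setIntegral_vorCell_le_quantE_sub Y hy (⨍ x in A, x)
  have hmin := hY.quantE_le_insert_erase hy hb
  have hm : 0 < volume.real A := ENNReal.toReal_pos hA0.ne' hAfin
  have hsq : dist y (⨍ x in A, x) ^ 2 ≤ 0 :=
    le_of_mul_le_mul_left (by rw [mul_zero]; linarith) hm
  exact dist_eq_zero.1 (pow_eq_zero_iff two_ne_zero |>.1 (le_antisymm hsq (sq_nonneg _)))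

theorem mem_interior_Qcube (hY : IsMinimizer n Y) (hy : y ∈ Y) : y ∈ interior Qcube := by
  rw [hY.eq_setAverage_vorCell hy]
  exact setAverage_mem_interior_Qcube (isClosed_vorCell Y y).measurableSet (fun x hx => hx.1)
    (hY.volume_vorCell_pos hy).ne'

end IsMinimizer

theorem stmt_18_general (n : ℕ) (Y : Finset E3) (hY : IsMinimizer n Y)
    (y : E3) (hyY : y ∈ Y) :
    y ∈ interior (vorCell Y y) :=
  mem_interior_vorCell (hY.mem_interior_Qcube hyY)

theorem stmt_18 (n : ℕ) (hn : 1 ≤ n) (Y : Finset E3) (hY : IsMinimizer n Y)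
    (y : E3) (hyY : y ∈ Y) :
    y ∈ interior (vorCell Y y) :=
  stmt_18_general n Y hY y hyY
end
end

section
/- Let V ⊆ ℝ³ be a compact convex set, let y ∈ V, set r := max_{v ∈ V} |v − y|, assume r > 0, and let z ∈ V attain this maximum, with unit vector u := (z − y)/r. Then for every t ∈ [0, r], the Lebesgue measure of the slice V ∩ {x ∈ ℝ³ : ⟨x − y, u⟩ ≥ t} is at least |V| · ((r − t)/(2r))³. -/
open MeasureTheory RealInnerProductSpace

noncomputable section

theorem stmt_19 (V : Set E3) (hVcomp : IsCompact V) (hVconv : Convex ℝ V)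
    (y : E3) (hy : y ∈ V) (r : ℝ) (hrpos : 0 < r)
    (hr : IsGreatest ((fun v => dist v y) '' V) r)
    (z : E3) (hz : z ∈ V) (hzr : dist z y = r)
    (u : E3) (hu : u = r⁻¹ • (z - y)) (t : ℝ) (ht : t ∈ Set.Icc 0 r) :
    (volume (V ∩ {x : E3 | ⟪x - y, u⟫ ≥ t})).toReal ≥
      (volume V).toReal * ((r - t) / (2 * r)) ^ 3 := by
  obtain ⟨ht0, htr⟩ := ht
  set l : ℝ := (r - t) / (2 * r) with hl
  have hl0 : 0 ≤ l := div_nonneg (by linarith) (by linarith)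
  have hl1 : l ≤ 1 := by
    rw [hl, div_le_one (by linarith)]; linarith
  have hlr : l * (2 * r) = r - t := by
    rw [hl]; field_simp
  have hdist : ∀ x ∈ V, dist x y ≤ r := fun x hx => hr.2 ⟨x, hx, rfl⟩
  have hnormzy : ‖z - y‖ = r := by rw [← dist_eq_norm]; exact hzr
  have hnormu : ‖u‖ = 1 := by
    rw [hu, norm_smul, hnormzy, norm_inv, Real.norm_eq_abs, abs_of_pos hrpos,
      inv_mul_cancel₀ hrpos.ne']
  have hzu : ⟪z - y, u⟫ = r := by
    rw [hu, real_inner_smul_right, real_inner_self_eq_norm_sq, hnormzy]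
    field_simp
  have hsub : (AffineMap.homothety z l) '' V ⊆ V ∩ {x : E3 | ⟪x - y, u⟫ ≥ t} := by
    rintro _ ⟨x, hx, rfl⟩
    constructor
    · have hmem := hVconv hx hz hl0 (by linarith : (0:ℝ) ≤ 1 - l)
        (by ring : l + (1 - l) = 1)
      have heq : AffineMap.homothety z l x = l • x + (1 - l) • z := by
        simp [AffineMap.homothety_apply, smul_sub, sub_smul]
        abel
      rw [heq]; exact hmem
    · have hxy : ⟪x - y, u⟫ ≥ -r := by
        have h1 := abs_real_inner_le_norm (x - y) u
        rw [hnormu, mul_one] at h1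
        have h2 : ‖x - y‖ ≤ r := by rw [← dist_eq_norm]; exact hdist x hx
        have h3 := abs_le.1 (h1.trans h2)
        linarith [h3.1]
      show ⟪AffineMap.homothety z l x - y, u⟫ ≥ t
      have heq2 : AffineMap.homothety z l x - y = l • (x - y) + (1 - l) • (z - y) := by
        simp [AffineMap.homothety_apply, smul_sub, sub_smul]
        abel
      rw [heq2, inner_add_left, real_inner_smul_left, real_inner_smul_left, hzu]
      nlinarith [hxy, hl0]
  have hvol := MeasureTheory.Measure.addHaar_image_homothety (μ := volume) z l V
  rw [show Module.finrank ℝ E3 = 3 from finrank_euclideanSpace_fin] at hvol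
  have hineq : ENNReal.ofReal (l ^ 3) * volume V ≤
      volume (V ∩ {x : E3 | ⟪x - y, u⟫ ≥ t}) := by
    rw [← abs_of_nonneg (pow_nonneg hl0 3), ← hvol]
    exact measure_mono hsub
  have hfin : volume (V ∩ {x : E3 | ⟪x - y, u⟫ ≥ t}) < ⊤ :=
    lt_of_le_of_lt (measure_mono Set.inter_subset_left) hVcomp.measure_lt_top
  have hmono := ENNReal.toReal_mono hfin.ne hineq
  rw [ENNReal.toReal_mul, ENNReal.toReal_ofReal (pow_nonneg hl0 3)] at hmono
  linarith
end
end
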